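/- arXiv:1107.1073 — 8 statements merged into one kernel-verified Lean document; each statement's English description precedes it below -/
import Mathlib

section
/- Fix integers b > a ≥ 1 and let g := gcd(a, b). For every positive integer n, the set T_n of all even subpowers of b/g that lie in {1, ..., n} is an {a,b}-multiplicative set, and it has maximum cardinality among all {a,b}-multiplicative subsets of {1, ..., n}. -/
/-!
Write `a = g a'`, `b = g b'` with `g = gcd a b`; then `a x = b y ↔ a' x = b' y`, so we may assume
`a` and `b` coprime. Multiplying by `a` keeps the exponent of the largest power of `b` dividing a
number, while multiplying by `b` raises it by one; hence `a x = b y` forces the exponents of `x`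
and `y` to have different parity, and the even subpowers form an `{a,b}`-multiplicative set.
For maximality, send an even subpower `x ∈ S` to itself and an odd one `x = b m` to `a m`, an
even subpower below `x`. This map is injective on an `{a,b}`-multiplicative `S`: `x = a m` with
`y = b m` would give `a y = b x`.
-/

/-- `S` is `{a,b}`-multiplicative: `a*x ≠ b*y` for all `x, y ∈ S`. -/
def MulSidonPair (a b : ℕ) (S : Set ℕ) : Prop :=
  ∀ x ∈ S, ∀ y ∈ S, a * x ≠ b * y

/-- `x` is an `i`-th subpower of `b`: `x = b^i * y` for some `y ≥ 1` with `b ∤ y`. -/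
def IsSubpower (b i x : ℕ) : Prop :=
  ∃ y : ℕ, 0 < y ∧ ¬ b ∣ y ∧ x = b ^ i * y

/-- `x` is an even subpower of `b`. -/
def IsEvenSubpower (b x : ℕ) : Prop :=
  ∃ i : ℕ, Even i ∧ IsSubpower b i x

attribute [local instance] Classical.propDecidable

namespace IsSubpower

variable {b i j x : ℕ}

theorem pos (hb : 0 < b) (h : IsSubpower b i x) : 0 < x := by
  obtain ⟨y, hy, -, rfl⟩ := h
  positivity

theorem emultiplicity_eq (hb : 0 < b) (h : IsSubpower b i x) : emultiplicity b x = i := by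
  obtain ⟨y, -, hby, rfl⟩ := h
  refine emultiplicity_eq_coe.2 ⟨dvd_mul_right _ _, ?_⟩
  rwa [pow_succ, mul_dvd_mul_iff_left (pow_ne_zero _ hb.ne')]

theorem unique (hb : 0 < b) (hi : IsSubpower b i x) (hj : IsSubpower b j x) : i = j := by
  exact_mod_cast (hi.emultiplicity_eq hb).symm.trans (hj.emultiplicity_eq hb)

theorem exists_of_pos (hb : 2 ≤ b) (hx : 0 < x) : ∃ i, IsSubpower b i x := by
  obtain ⟨y, hxy, hby⟩ :=
    (Nat.finiteMultiplicity_iff.2 ⟨(by omega : b ≠ 1), hx⟩).exists_eq_pow_mul_and_not_dvd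
  exact ⟨_, y, Nat.pos_of_ne_zero (by rintro rfl; exact hby (dvd_zero b)), hby, hxy⟩

theorem base_mul (h : IsSubpower b i x) : IsSubpower b (i + 1) (b * x) := by
  obtain ⟨y, hy, hby, rfl⟩ := h
  exact ⟨y, hy, hby, by ring⟩

theorem coprime_mul (h : IsSubpower b i x) {c : ℕ} (hc : c.Coprime b) :
    IsSubpower b i (c * x) := by
  obtain ⟨y, hy, hby, rfl⟩ := h
  have hc0 : c ≠ 0 := by
    rintro rfl
    exact hby (Nat.coprime_zero_left b |>.1 hc ▸ one_dvd y)
  exact ⟨c * y, by positivity, fun hd => hby (hc.symm.dvd_of_dvd_mul_left hd), by ring⟩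

end IsSubpower

namespace IsEvenSubpower

variable {b x : ℕ}

theorem pos (hb : 0 < b) (h : IsEvenSubpower b x) : 0 < x := by
  obtain ⟨_, -, hi⟩ := h
  exact hi.pos hb

theorem coprime_mul (h : IsEvenSubpower b x) {c : ℕ} (hc : c.Coprime b) :
    IsEvenSubpower b (c * x) := by
  obtain ⟨i, hi, hx⟩ := h
  exact ⟨i, hi, hx.coprime_mul hc⟩

end IsEvenSubpower

theorem exists_eq_mul_isEvenSubpower_of_not_isEvenSubpower {b x : ℕ} (hb : 2 ≤ b) (hx : 0 < x)
    (h : ¬IsEvenSubpower b x) : ∃ m, x = b * m ∧ IsEvenSubpower b m := by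
  obtain ⟨i, y, hy, hby, rfl⟩ := IsSubpower.exists_of_pos hb hx
  have hi : ¬Even i := fun hi => h ⟨i, hi, y, hy, hby, rfl⟩
  obtain ⟨k, rfl⟩ : ∃ k, i = k + 1 := ⟨i - 1, by grind⟩
  refine ⟨b ^ k * y, by ring, k, ?_, y, hy, hby, rfl⟩
  simpa [Nat.even_add_one] using hi

namespace MulSidonPair

variable {a b : ℕ} {S : Set ℕ}

theorem mono {T : Set ℕ} (h : MulSidonPair a b T) (hST : S ⊆ T) : MulSidonPair a b S :=
  fun x hx y hy => h x (hST hx) y (hST hy)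

theorem mul_left_iff {c : ℕ} (hc : 0 < c) :
    MulSidonPair (c * a) (c * b) S ↔ MulSidonPair a b S := by
  simp only [MulSidonPair, mul_assoc, ne_eq, Nat.mul_left_cancel_iff hc]

theorem iff_div_gcd (ha : 0 < a) :
    MulSidonPair a b S ↔ MulSidonPair (a / a.gcd b) (b / a.gcd b) S := by
  have hg := Nat.gcd_pos_of_pos_left b ha
  obtain ⟨a', ha'⟩ := Nat.gcd_dvd_left a b
  obtain ⟨b', hb'⟩ := Nat.gcd_dvd_right a b
  generalize a.gcd b = g at *
  subst ha' hb'
  rw [mul_left_iff hg, Nat.mul_div_cancel_left _ hg, Nat.mul_div_cancel_left _ hg]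

end MulSidonPair

theorem mulSidonPair_setOf_isEvenSubpower {a b : ℕ} (hb : 0 < b) (hcop : a.Coprime b) :
    MulSidonPair a b {x | IsEvenSubpower b x} := by
  rintro x ⟨i, hi, hx⟩ y ⟨j, hj, hy⟩ hxy
  have hij : i = j + 1 := (hx.coprime_mul hcop).unique hb (hxy ▸ hy.base_mul)
  grind

theorem MulSidonPair.card_le_card_filter_isEvenSubpower {a b n : ℕ} (ha : 0 < a) (hab : a < b)
    (hcop : a.Coprime b) {S : Finset ℕ} (hS : ↑S ⊆ Set.Icc 1 n) (hSid : MulSidonPair a b ↑S) :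
    S.card ≤ ((Finset.Icc 1 n).filter (IsEvenSubpower b)).card := by
  have hb : 0 < b := by omega
  have hodd : ∀ x ∈ S, ¬IsEvenSubpower b x → ∃ m, x = b * m ∧ IsEvenSubpower b m :=
    fun x hx h => exists_eq_mul_isEvenSubpower_of_not_isEvenSubpower (by omega) (hS hx).1 h
  refine Finset.card_le_card_of_injOn
    (fun x => if IsEvenSubpower b x then x else a * (x / b)) ?_ ?_
  · intro x hx
    obtain ⟨hx1, hxn⟩ := hS hx
    simp only [Finset.coe_filter, Finset.mem_Icc, Set.mem_ofPred_eq]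
    split_ifs with h
    · exact ⟨⟨hx1, hxn⟩, h⟩
    · obtain ⟨m, rfl, hm⟩ := hodd x hx h
      rw [Nat.mul_div_cancel_left _ hb]
      have ham := hm.coprime_mul hcop
      exact ⟨⟨ham.pos hb, (Nat.mul_le_mul_right m hab.le).trans hxn⟩, ham⟩
  · intro x hx y hy hxy
    simp only at hxy
    split_ifs at hxy with hxe hye hye
    · exact hxy
    · obtain ⟨m, rfl, -⟩ := hodd y hy hye
      rw [Nat.mul_div_cancel_left _ hb] at hxy
      exact absurd (by rw [hxy]; ring) (hSid _ hy _ hx)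
    · obtain ⟨m, rfl, -⟩ := hodd x hx hxe
      rw [Nat.mul_div_cancel_left _ hb] at hxy
      exact absurd (by rw [← hxy]; ring) (hSid _ hx _ hy)
    · obtain ⟨m, rfl, -⟩ := hodd x hx hxe
      obtain ⟨m', rfl, -⟩ := hodd y hy hye
      rw [Nat.mul_div_cancel_left _ hb, Nat.mul_div_cancel_left _ hb,
        Nat.mul_left_cancel_iff ha] at hxy
      rw [hxy]

theorem stmt0_general (a b : ℕ) (ha : 1 ≤ a) (hab : a < b) (n : ℕ) :
    MulSidonPair a b
      ↑((Finset.Icc 1 n).filter (IsEvenSubpower (b / Nat.gcd a b))) ∧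
    ∀ S : Finset ℕ, ↑S ⊆ Set.Icc 1 n → MulSidonPair a b ↑S →
      S.card ≤ ((Finset.Icc 1 n).filter (IsEvenSubpower (b / Nat.gcd a b))).card := by
  have hg : 0 < a.gcd b := Nat.gcd_pos_of_pos_left b ha
  have hcop : (a / a.gcd b).Coprime (b / a.gcd b) := Nat.coprime_div_gcd_div_gcd hg
  have ha' : 0 < a / a.gcd b := Nat.div_pos (Nat.gcd_le_left b ha) hg
  have hab' : a / a.gcd b < b / a.gcd b :=
    Nat.div_lt_div_of_lt_of_dvd (Nat.gcd_dvd_right a b) hab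
  simp only [MulSidonPair.iff_div_gcd ha]
  refine ⟨(mulSidonPair_setOf_isEvenSubpower (by omega) hcop).mono fun x hx => ?_,
    fun S hS hSid => hSid.card_le_card_filter_isEvenSubpower ha' hab' hcop hS⟩
  exact (Finset.mem_filter.1 hx).2

theorem stmt0 (a b : ℕ) (ha : 1 ≤ a) (hab : a < b) (n : ℕ) (hn : 1 ≤ n) :
    MulSidonPair a b
      ↑((Finset.Icc 1 n).filter (IsEvenSubpower (b / Nat.gcd a b))) ∧
    ∀ S : Finset ℕ, ↑S ⊆ Set.Icc 1 n → MulSidonPair a b ↑S →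
      S.card ≤ ((Finset.Icc 1 n).filter (IsEvenSubpower (b / Nat.gcd a b))).card :=
  stmt0_general a b ha hab n
end

section
/- Fix integers b > a ≥ 1 and let g := gcd(a, b). Every {a,b}-multiplicative set S ⊆ ℕ satisfies limsup_{n→∞} |S ∩ {1,...,n}|/n ≤ b/(b+g). -/
attribute [local instance] Classical.propDecidable

/-!
Dividing by `g = gcd(a, b)` we may assume `a = p`, `b = q` coprime with `p < q`. Let `E(N)` be
the set of `t ∈ [1, N]` whose `q`-adic valuation is even. For `t ∈ E(n/q)` at least one of
`p t`, `q t` lies in `[1, n] \ S`, and choosing one for each `t` is injective because `v_q(q t)`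
is odd while `v_q(p t)` is even; hence `|S ∩ [1, n]| ≤ n - |E(n/q)|`. Since `E(N)` and
`q • E(N/q)` partition `[1, N]`, the defect `(q + 1)|E(N)| - qN` changes by less than `q` per
base-`q` digit of `N`, so `|E(N)| = qN/(q + 1) + O(log N)` and
`|S ∩ [1, n]| ≤ qn/(q + 1) + O(log n)`.
-/

open Finset Filter Asymptotics

theorem padicValNat_mul_of_coprime {p q t : ℕ} (hq : 1 < q) (hco : p.Coprime q) (hp : p ≠ 0)
    (ht : t ≠ 0) : padicValNat q (p * t) = padicValNat q t := by
  apply le_antisymm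
  · rw [← Nat.pow_dvd_iff_le_padicValNat hq.ne' ht]
    exact (hco.symm.pow_left _).dvd_of_dvd_mul_left pow_padicValNat_dvd
  · rw [← Nat.pow_dvd_iff_le_padicValNat hq.ne' (mul_ne_zero hp ht)]
    exact pow_padicValNat_dvd.mul_left p

noncomputable def evenValIcc (q N : ℕ) : Finset ℕ :=
  (Icc 1 N).filter fun t => Even (padicValNat q t)

theorem filter_not_even_padicValNat_Icc_eq_map {q : ℕ} (hq : 1 < q) (N : ℕ) :
    (Icc 1 N).filter (fun t => ¬Even (padicValNat q t)) =
      (evenValIcc q (N / q)).map ⟨(q * ·), mul_right_injective₀ (by omega)⟩ := by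
  ext t
  simp only [evenValIcc, mem_filter, mem_Icc, Finset.mem_map, Function.Embedding.coeFn_mk]
  constructor
  · rintro ⟨⟨ht1, htN⟩, hodd⟩
    have hdvd : q ^ 1 ∣ t := by
      rw [Nat.pow_dvd_iff_le_padicValNat hq.ne' (by omega), Nat.one_le_iff_ne_zero]
      rintro h
      simp [h] at hodd
    obtain ⟨s, rfl⟩ : q ∣ t := by simpa using hdvd
    have hs : s ≠ 0 := by rintro rfl; omega
    rw [padicValNat_base_mul hq hs, Nat.even_add_one, not_not] at hodd
    refine ⟨s, ⟨⟨by omega, ?_⟩, hodd⟩, rfl⟩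
    exact (Nat.le_div_iff_mul_le (by omega)).2 (by linarith)
  · rintro ⟨s, ⟨⟨hs1, hsN⟩, heven⟩, rfl⟩
    rw [padicValNat_base_mul hq (by omega), Nat.even_add_one, not_not]
    refine ⟨⟨by nlinarith, ?_⟩, heven⟩
    exact (Nat.mul_le_mul_left q hsN).trans (Nat.mul_div_le N q)

theorem card_evenValIcc_add_card_evenValIcc_div {q : ℕ} (hq : 1 < q) (N : ℕ) :
    #(evenValIcc q N) + #(evenValIcc q (N / q)) = N := by
  rw [← card_map (s := evenValIcc q (N / q)) ⟨(q * ·), mul_right_injective₀ (by omega)⟩,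
    ← filter_not_even_padicValNat_Icc_eq_map hq, evenValIcc, card_filter_add_card_filter_not,
    Nat.card_Icc, Nat.add_sub_cancel]

theorem abs_succ_mul_card_evenValIcc_sub_le {q : ℕ} (hq : 1 < q) (N : ℕ) :
    |((q + 1) * #(evenValIcc q N) : ℤ) - q * N| ≤ q * (q.digits N).length := by
  induction N using Nat.strong_induction_on with
  | _ N ih =>
  rcases Nat.eq_zero_or_pos N with rfl | hN
  · simp [evenValIcc]
  have hrec : (#(evenValIcc q N) + #(evenValIcc q (N / q)) : ℤ) = N := by
    exact_mod_cast card_evenValIcc_add_card_evenValIcc_div hq N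
  have hdiv : (q * (N / q : ℕ) + (N % q : ℕ) : ℤ) = N := by exact_mod_cast Nat.div_add_mod N q
  have hmod : ((N % q : ℕ) : ℤ) < q := by exact_mod_cast Nat.mod_lt N (by omega)
  have hstep : ((q + 1) * #(evenValIcc q N) : ℤ) - q * N =
      (N % q : ℕ) - (((q + 1) * #(evenValIcc q (N / q)) : ℤ) - q * (N / q : ℕ)) := by
    linear_combination (q + 1 : ℤ) * hrec - hdiv
  rw [hstep, Nat.digits_def' hq hN, List.length_cons]
  have := ih (N / q) (Nat.div_lt_self hN hq)
  push_cast
  calc _ ≤ |((N % q : ℕ) : ℤ)|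
          + |((q + 1) * #(evenValIcc q (N / q)) : ℤ) - q * (N / q : ℕ)| := abs_sub _ _
    _ ≤ _ := by rw [abs_of_nonneg (by positivity)]; linarith

theorem MulSidonPair.div_gcd {a b : ℕ} {S : Set ℕ} (hS : MulSidonPair a b S) :
    MulSidonPair (a / a.gcd b) (b / a.gcd b) S := by
  intro x hx y hy hxy
  apply hS x hx y hy
  calc a * x = a.gcd b * (a / a.gcd b * x) := by
        rw [← mul_assoc, Nat.mul_div_cancel' (Nat.gcd_dvd_left a b)]
    _ = b * y := by rw [hxy, ← mul_assoc, Nat.mul_div_cancel' (Nat.gcd_dvd_right a b)]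

section Injection

variable {p q : ℕ} {S : Set ℕ} (hp : 0 < p) (hpq : p ≤ q) (hq : 1 < q) (hco : p.Coprime q)
  (hS : MulSidonPair p q S)
include hp hpq hq hco hS

theorem card_filter_mem_Icc_add_card_evenValIcc_le (n : ℕ) :
    #((Icc 1 n).filter (· ∈ S)) + #(evenValIcc q (n / q)) ≤ n := by
  suffices #(evenValIcc q (n / q)) ≤ #((Icc 1 n).filter (· ∉ S)) by
    have := card_filter_add_card_filter_not (s := Icc 1 n) (· ∈ S)
    rw [Nat.card_Icc] at this
    omega
  have hmem : ∀ t ∈ evenValIcc q (n / q), ∀ m, 1 ≤ m → m ≤ q → m * t ∈ Icc 1 n := by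
    intro t ht m hm1 hmq
    simp only [evenValIcc, mem_filter, mem_Icc] at ht ⊢
    exact ⟨by nlinarith, (Nat.mul_le_mul_right t hmq).trans
      ((Nat.mul_le_mul_left q ht.1.2).trans (Nat.mul_div_le n q))⟩
  have hval : ∀ t ∈ evenValIcc q (n / q),
      ¬Even (padicValNat q (q * t)) ∧ Even (padicValNat q (p * t)) := by
    intro t ht
    simp only [evenValIcc, mem_filter, mem_Icc] at ht
    rw [padicValNat_base_mul hq (by omega), padicValNat_mul_of_coprime hq hco hp.ne' (by omega),
      Nat.even_add_one, not_not]
    exact ⟨ht.2, ht.2⟩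
  refine card_le_card_of_injOn (fun t => if p * t ∈ S then q * t else p * t) ?_ ?_
  · intro t ht
    simp only [coe_filter, Set.mem_ofPred_eq]
    split_ifs with hpt
    · refine ⟨hmem t ht q (by omega) le_rfl, fun hqt => hS (q * t) hqt (p * t) hpt ?_⟩
      ring
    · exact ⟨hmem t ht p hp hpq, hpt⟩
  · intro t₁ ht₁ t₂ ht₂ heq
    have h₁ := hval t₁ ht₁
    have h₂ := hval t₂ ht₂
    simp only at heq
    split_ifs at heq
    · exact Nat.eq_of_mul_eq_mul_left (by omega) heq
    · exact absurd (heq ▸ h₂.2) h₁.1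
    · exact absurd (heq ▸ h₁.2) h₂.1
    · exact Nat.eq_of_mul_eq_mul_left hp heq

theorem succ_mul_card_filter_mem_Icc_le (n : ℕ) :
    (q + 1) * #((Icc 1 n).filter (· ∈ S)) ≤ q * n + q * ((q.digits n).length + 1) := by
  have hcount : (#((Icc 1 n).filter (· ∈ S)) + #(evenValIcc q (n / q)) : ℤ) ≤ n := by
    exact_mod_cast card_filter_mem_Icc_add_card_evenValIcc_le hp hpq hq hco hS n
  have hE := (abs_le.1 (abs_succ_mul_card_evenValIcc_sub_le hq (n / q))).1
  have hlen : ((q.digits (n / q)).length : ℤ) ≤ (q.digits n).length := by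
    exact_mod_cast Nat.le_length_digits_le q _ _ (Nat.div_le_self n q)
  have hdiv : (q * (n / q : ℕ) + (n % q : ℕ) : ℤ) = n := by exact_mod_cast Nat.div_add_mod n q
  have hmod : ((n % q : ℕ) : ℤ) < q := by exact_mod_cast Nat.mod_lt n (by omega)
  have hq0 : (0 : ℤ) ≤ q := by positivity
  zify
  nlinarith [mul_le_mul_of_nonneg_left hcount (by positivity : (0 : ℤ) ≤ q + 1),
    mul_le_mul_of_nonneg_left hlen hq0]

end Injection

theorem isLittleO_length_digits {b : ℕ} (hb : 1 < b) :
    (fun n => ((b.digits n).length : ℝ)) =o[atTop] (fun n => (n : ℝ)) := by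
  have hlog := Real.isLittleO_log_id_atTop.comp_tendsto tendsto_natCast_atTop_atTop
  have hone := (isLittleO_const_id_atTop (1 : ℝ)).comp_tendsto tendsto_natCast_atTop_atTop
  refine IsBigO.trans_isLittleO ?_ ((hlog.const_mul_left (Real.log b)⁻¹).add hone)
  refine IsBigO.of_bound 1 (eventually_ne_atTop 0 |>.mono fun n hn => ?_)
  rw [one_mul, Real.norm_natCast, Nat.length_digits b n hb hn]
  refine le_trans ?_ (Real.le_norm_self _)
  push_cast
  gcongr
  · exact (Real.natLog_le_logb n b).trans_eq (inv_mul_eq_div _ _).symm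
  · exact le_rfl

theorem limsup_div_le_of_le_add_isLittleO {f e : ℕ → ℝ} {c : ℝ} (hf : ∀ n, 0 ≤ f n)
    (hle : ∀ n, f n ≤ c * n + e n) (he : e =o[atTop] (fun n => (n : ℝ))) :
    limsup (fun n => f n / n) atTop ≤ c := by
  have hlim : Tendsto (fun n : ℕ => c + e n / n) atTop (nhds c) := by
    simpa using tendsto_const_nhds.add he.tendsto_div_nhds_zero
  rw [← hlim.limsup_eq]
  refine limsup_le_limsup ?_
    (isCoboundedUnder_le_of_le atTop fun n => div_nonneg (hf n) n.cast_nonneg)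
    hlim.isBoundedUnder_le
  filter_upwards [eventually_gt_atTop 0] with n hn
  have hn' : (0 : ℝ) < n := by exact_mod_cast hn
  rw [div_le_iff₀ hn', add_mul, div_mul_cancel₀ _ hn'.ne']
  linarith [hle n]

theorem stmt2 (a b : ℕ) (ha : 1 ≤ a) (hab : a < b) (S : Set ℕ)
    (hS : MulSidonPair a b S) :
    Filter.limsup
      (fun n : ℕ => (((Finset.Icc 1 n).filter (· ∈ S)).card : ℝ) / n)
      Filter.atTop ≤ (b : ℝ) / ((b : ℝ) + (Nat.gcd a b : ℝ)) := by
  set g := a.gcd b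
  have hg : 0 < g := Nat.gcd_pos_of_pos_left b ha
  have hp : 0 < a / g := Nat.div_pos (Nat.gcd_le_left b ha) hg
  have hpq : a / g < b / g := Nat.div_lt_div_of_lt_of_dvd (Nat.gcd_dvd_right a b) hab
  set q := b / g
  have hq : 1 < q := by omega
  have hbound := succ_mul_card_filter_mem_Icc_le hp hpq.le hq (Nat.coprime_div_gcd_div_gcd hg)
    hS.div_gcd
  have hrhs : (b : ℝ) / (b + g) = q / (q + 1) := by
    have hb : (b : ℝ) = g * q := by
      exact_mod_cast (Nat.mul_div_cancel' (Nat.gcd_dvd_right a b)).symm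
    rw [hb, ← mul_add_one, mul_div_mul_left _ _ (by positivity)]
  rw [hrhs]
  refine limsup_div_le_of_le_add_isLittleO (e := fun n => q / (q + 1) * ((q.digits n).length + 1))
    (fun _ => Nat.cast_nonneg _) (fun n => ?_) ?_
  · rw [← mul_add, div_mul_eq_mul_div, le_div_iff₀ (by positivity)]
    exact_mod_cast (mul_comm (q + 1) _).symm.trans_le ((hbound n).trans_eq (mul_add _ _ _).symm)
  · have hone := (isLittleO_const_id_atTop (1 : ℝ)).comp_tendsto tendsto_natCast_atTop_atTop
    exact ((isLittleO_length_digits hq).add hone).const_mul_left _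
end

section
/- Fix an integer b ≥ 2 and let T_n denote the set of even subpowers of b lying in {1, ..., n}. For every positive integer n, |T_n| ≤ 1 + (1/2)·log_b(n) + bn/(b+1). -/
attribute [local instance] Classical.propDecidable

open Finset

lemma IsSubpower.pow_le {b i x : ℕ} (h : IsSubpower b i x) : b ^ i ≤ x := by
  obtain ⟨y, hy, -, rfl⟩ := h
  exact Nat.le_mul_of_pos_right _ hy

lemma card_filter_not_dvd_Icc (b M : ℕ) : #{y ∈ Icc 1 M | ¬ b ∣ y} = M - M / b := by
  have hdvd : #{y ∈ Icc 1 M | b ∣ y} = M / b := Nat.Ioc_filter_dvd_card_eq_div M b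
  have hsplit := card_filter_add_card_filter_not (s := Icc 1 M) (p := (b ∣ ·))
  rw [Nat.card_Icc, add_tsub_cancel_right] at hsplit
  omega

lemma card_filter_isSubpower_Icc_le {b : ℕ} (hb : 0 < b) (i n : ℕ) :
    #{x ∈ Icc 1 n | IsSubpower b i x} ≤ n / b ^ i - n / b ^ i / b := by
  have hbi : 0 < b ^ i := pow_pos hb i
  rw [← card_filter_not_dvd_Icc]
  refine (card_le_card fun x hx => ?_).trans (card_image_le (f := (b ^ i * ·)))
  obtain ⟨⟨-, hxn⟩, y, hy, hby, rfl⟩ := by simpa only [mem_filter, mem_Icc] using hx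
  refine mem_image.2 ⟨y, mem_filter.2 ⟨mem_Icc.2 ⟨hy, ?_⟩, hby⟩, rfl⟩
  exact (Nat.le_div_iff_mul_le hbi).2 (by linarith [Nat.mul_comm (b ^ i) y])

lemma natCast_sub_div_le (M : ℕ) {b : ℕ} (hb : 0 < b) :
    ((M - M / b : ℕ) : ℝ) ≤ (1 - (b : ℝ)⁻¹) * M + 1 := by
  have hb' : (0 : ℝ) < b := by exact_mod_cast hb
  have hlt : (M : ℝ) < (M / b : ℕ) * b + b := by exact_mod_cast Nat.lt_div_mul_add hb
  have hq : (M - b : ℝ) / b ≤ (M / b : ℕ) := by rw [div_le_iff₀ hb']; linarith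
  have hrw : (1 - (b : ℝ)⁻¹) * M + 1 = M - (M - b) / b := by field_simp; ring
  rw [Nat.cast_sub (Nat.div_le_self M b), hrw]
  linarith

lemma card_filter_isSubpower_Icc_le_real {b : ℕ} (hb : 0 < b) (i n : ℕ) :
    (#{x ∈ Icc 1 n | IsSubpower b i x} : ℝ) ≤ (1 - (b : ℝ)⁻¹) * (n / b ^ i) + 1 := by
  have hdensity : 0 ≤ 1 - (b : ℝ)⁻¹ :=
    sub_nonneg.2 (inv_le_one_of_one_le₀ (by exact_mod_cast hb))
  calc (#{x ∈ Icc 1 n | IsSubpower b i x} : ℝ)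
      ≤ ((n / b ^ i - n / b ^ i / b : ℕ) : ℝ) := by
        exact_mod_cast card_filter_isSubpower_Icc_le hb i n
    _ ≤ (1 - (b : ℝ)⁻¹) * (n / b ^ i : ℕ) + 1 := natCast_sub_div_le _ hb
    _ ≤ (1 - (b : ℝ)⁻¹) * (n / b ^ i) + 1 := by
        gcongr
        exact_mod_cast Nat.cast_div_le

lemma filter_isEvenSubpower_Icc_subset {b : ℕ} (hb : 1 < b) (n : ℕ) :
    {x ∈ Icc 1 n | IsEvenSubpower b x} ⊆
      (range (Nat.log b n / 2 + 1)).biUnion fun j => {x ∈ Icc 1 n | IsSubpower b (2 * j) x} := by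
  intro x hx
  obtain ⟨hxIcc, i, ⟨j, rfl⟩, hsub⟩ := mem_filter.1 hx
  rw [← two_mul] at hsub
  have hlog : 2 * j ≤ Nat.log b n :=
    Nat.le_log_of_pow_le hb (hsub.pow_le.trans (mem_Icc.1 hxIcc).2)
  exact mem_biUnion.2 ⟨j, mem_range.2 (by omega), mem_filter.2 ⟨hxIcc, hsub⟩⟩

lemma sum_range_mul_div_pow_two_mul_le {b : ℝ} (hb : 1 < b) (c : ℝ) (hc : 0 ≤ c) (m : ℕ) :
    ∑ j ∈ range m, (1 - b⁻¹) * (c / b ^ (2 * j)) ≤ b * c / (b + 1) := by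
  have hr1 : (b ^ 2)⁻¹ < 1 := inv_lt_one_of_one_lt₀ (one_lt_pow₀ hb two_ne_zero)
  have hterm (j : ℕ) :
      (1 - b⁻¹) * (c / b ^ (2 * j)) = (1 - b⁻¹) * c * ((b ^ 2)⁻¹) ^ j := by
    rw [pow_mul, inv_pow, div_eq_mul_inv, mul_assoc]
  have hlimit : (1 - b⁻¹) * c * (1 - (b ^ 2)⁻¹)⁻¹ = b * c / (b + 1) := by
    have : b ^ 2 - 1 ≠ 0 := by nlinarith
    field_simp
    ring
  simp_rw [hterm, ← mul_sum, ← hlimit]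
  gcongr
  · exact mul_nonneg (sub_nonneg.2 (inv_le_one_of_one_le₀ hb.le)) hc
  · simpa [← range_eq_Ico] using
      geom_sum_Ico_le_of_lt_one (m := 0) (n := m) (by positivity) hr1

theorem stmt6_general (b : ℕ) (hb : 2 ≤ b) (n : ℕ) :
    (((Finset.Icc 1 n).filter (IsEvenSubpower b)).card : ℝ) ≤
      1 + (1 / 2) * Real.logb b n + (b : ℝ) * n / ((b : ℝ) + 1) := by
  set m := Nat.log b n / 2 + 1
  have hb' : (1 : ℝ) < b := by exact_mod_cast hb
  have hm : (m : ℝ) ≤ 1 + 1 / 2 * Real.logb b n := by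
    have hhalf : ((Nat.log b n / 2 : ℕ) : ℝ) ≤ (Nat.log b n : ℝ) / 2 := Nat.cast_div_le
    push_cast [m]
    linarith [Real.natLog_le_logb n b]
  calc (#{x ∈ Icc 1 n | IsEvenSubpower b x} : ℝ)
      ≤ ∑ j ∈ range m, (#{x ∈ Icc 1 n | IsSubpower b (2 * j) x} : ℝ) := by
        exact_mod_cast (card_le_card (filter_isEvenSubpower_Icc_subset hb n)).trans card_biUnion_le
    _ ≤ ∑ j ∈ range m, ((1 - (b : ℝ)⁻¹) * (n / b ^ (2 * j)) + 1) :=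
        sum_le_sum fun j _ => card_filter_isSubpower_Icc_le_real (by omega) (2 * j) n
    _ = ∑ j ∈ range m, (1 - (b : ℝ)⁻¹) * (n / b ^ (2 * j)) + m := by
        rw [sum_add_distrib, sum_const, card_range, nsmul_one]
    _ ≤ b * n / (b + 1) + m := by
        gcongr
        exact sum_range_mul_div_pow_two_mul_le hb' n n.cast_nonneg m
    _ ≤ 1 + 1 / 2 * Real.logb b n + b * n / (b + 1) := by linarith

theorem stmt6 (b : ℕ) (hb : 2 ≤ b) (n : ℕ) (hn : 1 ≤ n) :
    (((Finset.Icc 1 n).filter (IsEvenSubpower b)).card : ℝ) ≤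
      1 + (1 / 2) * Real.logb b n + (b : ℝ) * n / ((b : ℝ) + 1) :=
  stmt6_general b hb n
end

section
/- Fix an integer b ≥ 2 and let T_n denote the set of even subpowers of b lying in {1, ..., n}. For every positive integer n, |T_n| ≥ bn/(b+1) − (1/2)·(log_b(n) + 1). -/
attribute [local instance] Classical.propDecidable

open Finset

section Subpower

variable {b i j x : ℕ}

theorem IsSubpower.pos_s7 (hb : 0 < b) (h : IsSubpower b i x) : 0 < x := by
  obtain ⟨y, hy, -, rfl⟩ := h
  positivity

theorem isSubpower_iff (hb : 0 < b) (hx : 0 < x) :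
    IsSubpower b i x ↔ b ^ i ∣ x ∧ ¬ b ^ (i + 1) ∣ x := by
  constructor
  · rintro ⟨y, -, hby, rfl⟩
    rw [pow_succ, Nat.mul_dvd_mul_iff_left (by positivity)]
    exact ⟨dvd_mul_right _ _, hby⟩
  · rintro ⟨⟨y, rfl⟩, hnot⟩
    rw [pow_succ, Nat.mul_dvd_mul_iff_left (by positivity)] at hnot
    exact ⟨y, Nat.pos_of_mul_pos_left hx, hnot, rfl⟩

theorem IsSubpower.eq (hb : 0 < b) (hi : IsSubpower b i x) (hj : IsSubpower b j x) : i = j := by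
  have hx := hi.pos_s7 hb
  rw [isSubpower_iff hb hx] at hi hj
  by_contra hne
  rcases Nat.lt_or_gt_of_ne hne with h | h
  · exact hi.2 ((pow_dvd_pow b h).trans hj.1)
  · exact hj.2 ((pow_dvd_pow b h).trans hi.1)

theorem card_filter_isSubpower (hb : 0 < b) (n i : ℕ) :
    #{x ∈ Icc 1 n | IsSubpower b i x} = n / b ^ i - n / b ^ (i + 1) := by
  have hsub : {x ∈ Ioc 0 n | b ^ (i + 1) ∣ x} ⊆ {x ∈ Ioc 0 n | b ^ i ∣ x} :=
    monotone_filter_right _ fun _ _ h => (pow_dvd_pow b i.le_succ).trans h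
  rw [← Nat.Ioc_filter_dvd_card_eq_div, ← Nat.Ioc_filter_dvd_card_eq_div,
    ← card_sdiff_of_subset hsub]
  congr 1
  ext x
  by_cases hx : 0 < x
  · simp only [mem_filter, mem_sdiff, mem_Icc, mem_Ioc, isSubpower_iff hb hx]
    omega
  · simp only [mem_filter, mem_sdiff, mem_Icc, mem_Ioc]
    omega

theorem sum_card_filter_isSubpower_le (hb : 0 < b) (n K : ℕ) :
    ∑ k ∈ range K, #{x ∈ Icc 1 n | IsSubpower b (2 * k) x} ≤
      #{x ∈ Icc 1 n | IsEvenSubpower b x} := by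
  rw [← card_biUnion]
  · refine card_le_card fun x hx => ?_
    simp only [mem_biUnion, mem_filter] at hx ⊢
    obtain ⟨k, -, hxn, hk⟩ := hx
    exact ⟨hxn, 2 * k, even_two_mul k, hk⟩
  · intro k _ l _ hkl
    refine disjoint_filter.2 fun x _ hk hl => hkl ?_
    have := hk.eq hb hl
    omega

theorem sub_sub_one_lt_card_filter_isSubpower (hb : 0 < b) (n i : ℕ) :
    (n : ℝ) / b ^ i - n / b ^ (i + 1) - 1 < #{x ∈ Icc 1 n | IsSubpower b i x} := by
  rw [card_filter_isSubpower hb, Nat.cast_sub (Nat.div_le_div_left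
    (Nat.pow_le_pow_right hb i.le_succ) (by positivity))]
  have hfloor : (n : ℝ) / b ^ i - 1 < (n / b ^ i : ℕ) := by
    rw [← Nat.floor_div_eq_div (K := ℝ)]
    push_cast
    exact Nat.sub_one_lt_floor _
  have hdiv : ((n / b ^ (i + 1) : ℕ) : ℝ) ≤ n / b ^ (i + 1) := by
    exact_mod_cast Nat.cast_div_le
  linarith

theorem sub_div_le_card_filter_isSubpower_zero (hb : 0 < b) (n : ℕ) :
    (n : ℝ) - n / b ≤ #{x ∈ Icc 1 n | IsSubpower b 0 x} := by
  rw [card_filter_isSubpower hb, Nat.cast_sub (Nat.div_le_div_left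
    (Nat.pow_le_pow_right hb (Nat.zero_le 1)) (by positivity))]
  have hdiv : ((n / b : ℕ) : ℝ) ≤ n / b := Nat.cast_div_le
  simp only [pow_zero, Nat.div_one, pow_one]
  linarith

theorem sum_sub_le_card_filter_isEvenSubpower (hb : 0 < b) (n K : ℕ) :
    ∑ k ∈ range (K + 1), ((n : ℝ) / b ^ (2 * k) - n / b ^ (2 * k + 1)) - K ≤
      #{x ∈ Icc 1 n | IsEvenSubpower b x} := by
  calc ∑ k ∈ range (K + 1), ((n : ℝ) / b ^ (2 * k) - n / b ^ (2 * k + 1)) - K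
      = ∑ k ∈ range K, ((n : ℝ) / b ^ (2 * (k + 1)) - n / b ^ (2 * (k + 1) + 1) - 1)
          + ((n : ℝ) - n / b) := by
        simp only [sum_sub_distrib, sum_range_succ', mul_zero, pow_zero, div_one, zero_add,
          pow_one, sum_const, card_range, nsmul_eq_mul, mul_one]
        ring
    _ ≤ ∑ k ∈ range (K + 1), (#{x ∈ Icc 1 n | IsSubpower b (2 * k) x} : ℝ) := by
        rw [sum_range_succ']
        gcongr with k
        · exact (sub_sub_one_lt_card_filter_isSubpower hb n _).le
        · exact sub_div_le_card_filter_isSubpower_zero hb n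
    _ ≤ #{x ∈ Icc 1 n | IsEvenSubpower b x} := by
        exact_mod_cast sum_card_filter_isSubpower_le hb n (K + 1)

end Subpower

theorem sum_range_div_pow_sub_div_pow {B : ℝ} (hB : B ≠ 0) (hB1 : B + 1 ≠ 0) (c : ℝ) (K : ℕ) :
    ∑ k ∈ range K, (c / B ^ (2 * k) - c / B ^ (2 * k + 1)) =
      c * B / (B + 1) - c * B / ((B + 1) * B ^ (2 * K)) := by
  induction K with
  | zero => simp
  | succ K ih =>
    rw [sum_range_succ, ih, mul_add, pow_add, pow_succ]
    field_simp
    ring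

theorem div_pow_add_div_two_le_of_lt_pow {B x : ℝ} (hB : 1 ≤ B) {J : ℕ} (hx : x < B ^ (J + 1)) :
    x * B / ((B + 1) * B ^ (2 * (J / 2 + 1))) + (J / 2 : ℕ) ≤ (J + 1) / 2 := by
  have hB0 : 0 < B := by linarith
  have hxB := mul_lt_mul_of_pos_right hx hB0
  obtain ⟨K, rfl | rfl⟩ := Nat.even_or_odd' J
  · have htail : x * B / ((B + 1) * B ^ (2 * (K + 1))) ≤ 1 / 2 := by
      rw [div_le_iff₀ (by positivity), show 2 * (K + 1) = 2 * K + 1 + 1 by ring, pow_succ]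
      nlinarith [mul_le_mul_of_nonneg_right hB (mul_pos (pow_pos hB0 (2 * K + 1)) hB0).le]
    rw [Nat.mul_div_cancel_left K two_pos]
    push_cast
    linarith
  · have htail : x * B / ((B + 1) * B ^ (2 * (K + 1))) ≤ 1 := by
      rw [div_le_one (by positivity), show 2 * (K + 1) = 2 * K + 1 + 1 by ring]
      nlinarith [pow_pos hB0 (2 * K + 1 + 1)]
    rw [show (2 * K + 1) / 2 = K by omega]
    push_cast
    linarith

theorem stmt7_general (b : ℕ) (hb : 2 ≤ b) (n : ℕ) :
    (b : ℝ) * n / ((b : ℝ) + 1) - (1 / 2) * (Real.logb b n + 1) ≤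
      (((Finset.Icc 1 n).filter (IsEvenSubpower b)).card : ℝ) := by
  have hB : (2 : ℝ) ≤ b := by exact_mod_cast hb
  have hcount := sum_sub_le_card_filter_isEvenSubpower (by omega : 0 < b) n (Nat.log b n / 2)
  rw [sum_range_div_pow_sub_div_pow (by positivity) (by positivity)] at hcount
  have htail := div_pow_add_div_two_le_of_lt_pow (B := b) (x := n) (by linarith)
    (by exact_mod_cast Nat.lt_pow_succ_log_self hb n)
  have hlog := Real.natLog_le_logb n b
  rw [mul_comm (b : ℝ)]
  linarith

theorem stmt7 (b : ℕ) (hb : 2 ≤ b) (n : ℕ) (hn : 1 ≤ n) :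
    (b : ℝ) * n / ((b : ℝ) + 1) - (1 / 2) * (Real.logb b n + 1) ≤
      (((Finset.Icc 1 n).filter (IsEvenSubpower b)).card : ℝ) :=
  stmt7_general b hb n
end

section
/- Let H be the graph with vertex set ℕ₀ × ℕ₀ in which (v₁, v₂) and (w₁, w₂) are adjacent if and only if |v₁ − w₁| + |v₂ − w₂| = 1. Suppose F is a finite induced subgraph of H such that whenever (x, y) ∈ V(F): if x ≥ 1 then (x−1, y) ∈ V(F), and if y ≥ 1 then (x, y−1) ∈ V(F). Then at least one of the sets O := {(x, y) ∈ V(F) : x + y is odd} and E := {(x, y) ∈ V(F) : x + y is even} is a maximum independent set in F. -/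
def gridGraph : SimpleGraph (ℕ × ℕ) where
  Adj v w := |(v.1 : ℤ) - w.1| + |(v.2 : ℤ) - w.2| = 1
  symm := by
    refine ⟨?_⟩
    intro v w h
    simpa [abs_sub_comm] using h
  loopless := by
    refine ⟨?_⟩
    intro v h
    simp at h

def GridIndep (I : Finset (ℕ × ℕ)) : Prop :=
  ∀ v ∈ I, ∀ w ∈ I, ¬ gridGraph.Adj v w

/-!
Colour `(x, y)` by the parity of `x + y`; both colour classes are independent. For an independent
set `J` we strip off the first column of the Young diagram `F`, which is a path. If the vertices of
`J` in that column all have colour `c`, then sending every vertex of `J` of the other colour to its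
left neighbour injects it into the vertices of colour `c` outside `J`, so `|J|` is at most the size
of the colour class `c`. Otherwise `J` meets the first column in both colours; an independent set
in a path containing a vertex of colour `c` is at most as large as the colour class `c` of the
path, so the first column contributes at most the smaller of its two colour classes, and induction
on the remaining columns (where the colours swap) bounds the rest.
-/

open Finset

theorem Finset.card_le_card_of_injOn_sdiff {α : Type*} [DecidableEq α] {s t : Finset α}
    (p : α → Prop) [DecidablePred p] (f : α → α) (hp : ∀ a ∈ s, p a → a ∈ t)
    (hf : ∀ a ∈ s, ¬ p a → f a ∈ t \ s) (hinj : Set.InjOn f {a ∈ s | ¬ p a}) :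
    s.card ≤ t.card :=
  calc s.card = {a ∈ s | p a}.card + {a ∈ s | ¬ p a}.card :=
        (card_filter_add_card_filter_not p).symm
    _ ≤ (t ∩ s).card + (t \ s).card := by
        refine add_le_add (card_le_card fun a ha => ?_)
          (card_le_card_of_injOn f (fun a ha => ?_) (by simpa using hinj))
        · exact mem_inter.2 ⟨hp a (mem_filter.1 ha).1 (mem_filter.1 ha).2, (mem_filter.1 ha).1⟩
        · exact hf a (mem_filter.1 ha).1 (mem_filter.1 ha).2
    _ = t.card := card_inter_add_card_sdiff t s

theorem ZMod.eq_add_one_of_ne_mod_two {a b : ZMod 2} (h : a ≠ b) : a = b + 1 := by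
  revert a b
  decide

theorem gridGraph_adj_iff {v w : ℕ × ℕ} :
    gridGraph.Adj v w ↔ (v.1 = w.1 ∧ (v.2 + 1 = w.2 ∨ w.2 + 1 = v.2)) ∨
      (v.2 = w.2 ∧ (v.1 + 1 = w.1 ∨ w.1 + 1 = v.1)) := by
  change |(v.1 : ℤ) - w.1| + |(v.2 : ℤ) - w.2| = 1 ↔ _
  simp only [abs_eq_max_neg]
  omega

theorem gridGraph_adj_succ_fst {v w : ℕ × ℕ} :
    gridGraph.Adj (v.1 + 1, v.2) (w.1 + 1, w.2) ↔ gridGraph.Adj v w := by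
  simp only [gridGraph_adj_iff]
  omega

def gridColor (v : ℕ × ℕ) : ZMod 2 := ((v.1 + v.2 : ℕ) : ZMod 2)

theorem gridColor_eq_gridColor_iff {v w : ℕ × ℕ} :
    gridColor v = gridColor w ↔ (v.1 + v.2) % 2 = (w.1 + w.2) % 2 :=
  ZMod.natCast_eq_natCast_iff' _ _ 2

theorem gridColor_succ_fst (v : ℕ × ℕ) : gridColor (v.1 + 1, v.2) = gridColor v + 1 := by
  simp only [gridColor]
  push_cast
  ring

theorem gridColor_ne_of_adj {v w : ℕ × ℕ} (h : gridGraph.Adj v w) : gridColor v ≠ gridColor w := by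
  rw [Ne, gridColor_eq_gridColor_iff]
  rw [gridGraph_adj_iff] at h
  omega

def colorClass (F : Finset (ℕ × ℕ)) (c : ZMod 2) : Finset (ℕ × ℕ) :=
  {v ∈ F | gridColor v = c}

theorem gridIndep_colorClass (F : Finset (ℕ × ℕ)) (c : ZMod 2) : GridIndep (colorClass F c) := by
  intro v hv w hw hvw
  exact gridColor_ne_of_adj hvw ((mem_filter.1 hv).2.trans (mem_filter.1 hw).2.symm)

noncomputable def shiftLeft (F : Finset (ℕ × ℕ)) : Finset (ℕ × ℕ) :=
  F.preimage (fun v => (v.1 + 1, v.2)) <| Function.Injective.injOn fun v w h => by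
    simp only [Prod.mk.injEq, add_left_inj] at h
    exact Prod.ext h.1 h.2

@[simp]
theorem mem_shiftLeft {F : Finset (ℕ × ℕ)} {v : ℕ × ℕ} : v ∈ shiftLeft F ↔ (v.1 + 1, v.2) ∈ F :=
  mem_preimage

theorem shiftLeft_mono {F G : Finset (ℕ × ℕ)} (h : F ⊆ G) : shiftLeft F ⊆ shiftLeft G :=
  fun _ hv => mem_shiftLeft.2 (h (mem_shiftLeft.1 hv))

theorem card_eq_card_filter_fst_eq_zero_add_card_shiftLeft (F : Finset (ℕ × ℕ)) :
    F.card = {v ∈ F | v.1 = 0}.card + (shiftLeft F).card := by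
  classical
  rw [shiftLeft, card_preimage, ← card_filter_add_card_filter_not (s := F) (fun v => v.1 = 0)]
  congr 2
  refine filter_congr fun v _ => ⟨fun hv => ⟨(v.1 - 1, v.2), ?_⟩, ?_⟩
  · exact Prod.ext (Nat.sub_add_cancel (Nat.one_le_iff_ne_zero.2 hv)) rfl
  · rintro ⟨w, rfl⟩
    exact Nat.succ_ne_zero _

theorem shiftLeft_colorClass (F : Finset (ℕ × ℕ)) (c : ZMod 2) :
    shiftLeft (colorClass F (c + 1)) = colorClass (shiftLeft F) c := by
  ext v
  simp only [mem_shiftLeft, colorClass, mem_filter]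
  rw [gridColor_succ_fst, add_left_inj]

theorem isLowerSet_shiftLeft {F : Finset (ℕ × ℕ)} (hF : IsLowerSet (F : Set (ℕ × ℕ))) :
    IsLowerSet (shiftLeft F : Set (ℕ × ℕ)) := by
  intro w v hvw hw
  simp only [mem_coe, mem_shiftLeft] at hw ⊢
  exact hF (Prod.mk_le_mk.2 ⟨Nat.add_le_add_right hvw.1 1, hvw.2⟩) hw

theorem GridIndep.shiftLeft {J : Finset (ℕ × ℕ)} (hJ : GridIndep J) : GridIndep (shiftLeft J) :=
  fun _ hv _ hw hvw =>
    hJ _ (mem_shiftLeft.1 hv) _ (mem_shiftLeft.1 hw) (gridGraph_adj_succ_fst.2 hvw)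

theorem isLowerSet_of_forall_pred_mem {S : Set (ℕ × ℕ)}
    (hS : ∀ x y : ℕ, (x, y) ∈ S → (1 ≤ x → (x - 1, y) ∈ S) ∧ (1 ≤ y → (x, y - 1) ∈ S)) :
    IsLowerSet S := by
  suffices h : ∀ n, ∀ v w : ℕ × ℕ, w.1 - v.1 + (w.2 - v.2) = n → v ≤ w → w ∈ S → v ∈ S from
    fun w v hvw hw => h _ v w rfl hvw hw
  intro n
  induction n with
  | zero =>
    intro v w hn hvw hw
    rwa [show v = w from Prod.ext (by have := hvw.1; omega) (by have := hvw.2; omega)]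
  | succ n ih =>
    rintro ⟨a, b⟩ ⟨x, y⟩ hn hvw hw
    obtain ⟨hax, hby⟩ := Prod.mk_le_mk.1 hvw
    simp only at hn
    rcases Nat.lt_or_ge a x with hx | hx
    · exact ih (a, b) (x - 1, y) (by simp only; omega) (Prod.mk_le_mk.2 ⟨by omega, hby⟩)
        ((hS x y hw).1 (by omega))
    · exact ih (a, b) (x, y - 1) (by simp only; omega) (Prod.mk_le_mk.2 ⟨hax, by omega⟩)
        ((hS x y hw).2 (by omega))

section

variable {F J : Finset (ℕ × ℕ)} (hF : IsLowerSet (F : Set (ℕ × ℕ))) (hJF : J ⊆ F) (hJ : GridIndep J)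
include hF hJF hJ

theorem card_le_card_colorClass_of_forall_fst_eq_zero (c : ZMod 2)
    (hc : ∀ v ∈ J, v.1 = 0 → gridColor v ≠ c) : J.card ≤ (colorClass F (c + 1)).card := by
  refine card_le_card_of_injOn_sdiff (gridColor · ≠ c) (fun v => (v.1 - 1, v.2))
    (fun v hv hvc => mem_filter.2 ⟨hJF hv, ZMod.eq_add_one_of_ne_mod_two hvc⟩)
    (fun v hv hvc => ?_) (fun v hv w hw h => ?_)
  · have hv0 : v.1 ≠ 0 := fun h => hc v hv h (not_not.1 hvc)
    have hadj : gridGraph.Adj (v.1 - 1, v.2) v := by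
      rw [gridGraph_adj_iff]
      omega
    refine mem_sdiff.2 ⟨mem_filter.2 ⟨hF (Prod.mk_le_mk.2 ⟨Nat.sub_le _ _, le_rfl⟩) (hJF hv), ?_⟩,
      fun h => hJ _ h _ hv hadj⟩
    exact ZMod.eq_add_one_of_ne_mod_two ((not_not.1 hvc) ▸ gridColor_ne_of_adj hadj)
  · simp only [not_not, Set.mem_ofPred_eq, Prod.mk.injEq] at hv hw h
    have hv0 := mt (hc v hv.1) (not_not.2 hv.2)
    have hw0 := mt (hc w hw.1) (not_not.2 hw.2)
    exact Prod.ext (by omega) h.2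

theorem card_filter_fst_eq_zero_le_of_mem {v : ℕ × ℕ} (hv : v ∈ J) (hv0 : v.1 = 0) :
    {w ∈ J | w.1 = 0}.card ≤ {w ∈ colorClass F (gridColor v) | w.1 = 0}.card := by
  refine card_le_card_of_injOn_sdiff (gridColor · = gridColor v)
    (fun w => (0, if w.2 < v.2 then w.2 + 1 else w.2 - 1))
    (fun w hw hwc => ?_) (fun w hw hwc => ?_) (fun w hw w' hw' h => ?_)
  · simp only [mem_filter, colorClass] at hw ⊢
    exact ⟨⟨hJF hw.1, hwc⟩, hw.2⟩
  · simp only [mem_filter] at hw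
    rw [gridColor_eq_gridColor_iff] at hwc
    have hadj : gridGraph.Adj w (0, if w.2 < v.2 then w.2 + 1 else w.2 - 1) := by
      rw [gridGraph_adj_iff]
      split_ifs <;> omega
    have hmem : (0, if w.2 < v.2 then w.2 + 1 else w.2 - 1) ∈ F := by
      split_ifs with hlt
      · exact hF (Prod.mk_le_mk.2 ⟨by omega, hlt⟩) (hJF hv)
      · exact hF (Prod.mk_le_mk.2 ⟨by omega, Nat.sub_le _ _⟩) (hJF hw.1)
    simp only [mem_sdiff, mem_filter, colorClass, gridColor_eq_gridColor_iff, not_and]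
    refine ⟨⟨⟨hmem, ?_⟩, trivial⟩, fun h _ => hJ _ hw.1 _ h hadj⟩
    split_ifs <;> omega
  · simp only [mem_filter, Set.mem_ofPred_eq, gridColor_eq_gridColor_iff, Prod.mk.injEq] at hw hw' h
    obtain ⟨⟨hwJ, hw0⟩, hwc⟩ := hw
    obtain ⟨⟨hwJ', hw0'⟩, hwc'⟩ := hw'
    have hnext : ∀ u ∈ J, u.1 = 0 → u.2 + 1 ≠ v.2 := fun u hu hu0 h =>
      hJ _ hu _ hv (by rw [gridGraph_adj_iff]; omega)
    have := hnext w hwJ hw0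
    have := hnext w' hwJ' hw0'
    exact Prod.ext (by omega) (by split_ifs at h <;> omega)

theorem card_le_max_card_colorClass :
    J.card ≤ max (colorClass F 0).card (colorClass F 1).card := by
  obtain ⟨n, hn⟩ : ∃ n, ∀ v ∈ F, v.1 < n :=
    ⟨F.sup Prod.fst + 1, fun v hv => Nat.lt_succ_of_le (le_sup (f := Prod.fst) hv)⟩
  induction n generalizing F J with
  | zero =>
    rw [eq_empty_of_forall_notMem fun v hv => Nat.not_lt_zero _ (hn v (hJF hv)), card_empty]
    exact Nat.zero_le _
  | succ n ih =>
    have hrest := ih (isLowerSet_shiftLeft hF) (shiftLeft_mono hJF) hJ.shiftLeft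
      fun v hv => Nat.succ_lt_succ_iff.1 (hn _ (mem_shiftLeft.1 hv))
    have hJsplit := card_eq_card_filter_fst_eq_zero_add_card_shiftLeft J
    have hF0 := card_eq_card_filter_fst_eq_zero_add_card_shiftLeft (colorClass F (1 + 1))
    have hF1 := card_eq_card_filter_fst_eq_zero_add_card_shiftLeft (colorClass F (0 + 1))
    rw [shiftLeft_colorClass, show (1 + 1 : ZMod 2) = 0 from rfl] at hF0
    rw [shiftLeft_colorClass, zero_add] at hF1
    by_cases hc0 : ∃ v ∈ J, v.1 = 0 ∧ gridColor v = 0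
    · by_cases hc1 : ∃ v ∈ J, v.1 = 0 ∧ gridColor v = 1
      · obtain ⟨v, hv, hv0, hvc⟩ := hc0
        obtain ⟨w, hw, hw0, hwc⟩ := hc1
        have hJ0 := card_filter_fst_eq_zero_le_of_mem hF hJF hJ hv hv0
        have hJ1 := card_filter_fst_eq_zero_le_of_mem hF hJF hJ hw hw0
        rw [hvc] at hJ0
        rw [hwc] at hJ1
        omega
      · push Not at hc1
        have := card_le_card_colorClass_of_forall_fst_eq_zero hF hJF hJ 1 hc1
        rw [show (1 + 1 : ZMod 2) = 0 from rfl] at this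
        exact le_max_of_le_left this
    · push Not at hc0
      have := card_le_card_colorClass_of_forall_fst_eq_zero hF hJF hJ 0 hc0
      rw [zero_add] at this
      exact le_max_of_le_right this

end

theorem stmt10 (F : Finset (ℕ × ℕ))
    (hF : ∀ x y : ℕ, (x, y) ∈ F →
      (1 ≤ x → (x - 1, y) ∈ F) ∧ (1 ≤ y → (x, y - 1) ∈ F)) :
    (GridIndep (F.filter (fun v => Odd (v.1 + v.2))) ∧
      ∀ I : Finset (ℕ × ℕ), I ⊆ F → GridIndep I →
        I.card ≤ (F.filter (fun v => Odd (v.1 + v.2))).card) ∨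
    (GridIndep (F.filter (fun v => Even (v.1 + v.2))) ∧
      ∀ I : Finset (ℕ × ℕ), I ⊆ F → GridIndep I →
        I.card ≤ (F.filter (fun v => Even (v.1 + v.2))).card) := by
  have hodd : F.filter (fun v => Odd (v.1 + v.2)) = colorClass F 1 :=
    filter_congr fun _ _ => ZMod.natCast_eq_one_iff_odd.symm
  have heven : F.filter (fun v => Even (v.1 + v.2)) = colorClass F 0 :=
    filter_congr fun _ _ => ZMod.natCast_eq_zero_iff_even.symm
  have hbound I (hIF : I ⊆ F) (hI : GridIndep I) :=
    card_le_max_card_colorClass (isLowerSet_of_forall_pred_mem (S := F) hF) hIF hI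
  rw [hodd, heven]
  rcases le_total (colorClass F 0).card (colorClass F 1).card with h | h
  · exact Or.inl ⟨gridIndep_colorClass F 1, fun I hIF hI => (hbound I hIF hI).trans (by simp [h])⟩
  · exact Or.inr ⟨gridIndep_colorClass F 0, fun I hIF hI => (hbound I hIF hI).trans (by simp [h])⟩
end

section
/- Let a, b, c be pairwise coprime integers with 1 < a < b < c, and let p be a non-negative integer. If x, y, x', y' are non-negative integers with x + y ≤ p and x' + y' ≤ p, and the numbers u = a^{p−x−y} b^x c^y and v = a^{p−x'−y'} b^{x'} c^{y'} satisfy bu = av, or cu = av, or bv = au, or cv = au, then |x − x'| + |y − y'| = 1. -/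
lemma exp_eq_aux (a b c : ℕ) (ha : 1 < a) (hb : 1 < b) (hc : 1 < c)
    (hab : Nat.Coprime a b) (hac : Nat.Coprime a c) (hbc : Nat.Coprime b c)
    (m x y m' x' y' : ℕ)
    (h : b * (a ^ m * b ^ x * c ^ y) = a * (a ^ m' * b ^ x' * c ^ y')) :
    x' = x + 1 ∧ y' = y := by
  have ha0 : a ≠ 0 := by omega
  have hb0 : b ≠ 0 := by omega
  have hc0 : c ≠ 0 := by omega
  constructor
  · obtain ⟨q, hq, hqb⟩ := Nat.exists_prime_and_dvd (show b ≠ 1 by omega)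
    have hqa : ¬ q ∣ a := fun hd =>
      hq.ne_one (Nat.eq_one_of_dvd_one (hab ▸ Nat.dvd_gcd hd hqb))
    have hqc : ¬ q ∣ c := fun hd =>
      hq.ne_one (Nat.eq_one_of_dvd_one (hbc ▸ Nat.dvd_gcd hqb hd))
    have := congrArg (fun n => n.factorization q) h
    simp [Nat.factorization_mul, Nat.factorization_pow, ha0, hb0, hc0,
      pow_ne_zero, mul_ne_zero, Nat.factorization_eq_zero_of_not_dvd hqa,
      Nat.factorization_eq_zero_of_not_dvd hqc] at this
    have he : 0 < b.factorization q := hq.factorization_pos_of_dvd hb0 hqb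
    nlinarith [this]
  · obtain ⟨q, hq, hqc⟩ := Nat.exists_prime_and_dvd (show c ≠ 1 by omega)
    have hqa : ¬ q ∣ a := fun hd =>
      hq.ne_one (Nat.eq_one_of_dvd_one (hac ▸ Nat.dvd_gcd hd hqc))
    have hqb : ¬ q ∣ b := fun hd =>
      hq.ne_one (Nat.eq_one_of_dvd_one (hbc ▸ Nat.dvd_gcd hd hqc))
    have := congrArg (fun n => n.factorization q) h
    simp [Nat.factorization_mul, Nat.factorization_pow, ha0, hb0, hc0,
      pow_ne_zero, mul_ne_zero, Nat.factorization_eq_zero_of_not_dvd hqa,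
      Nat.factorization_eq_zero_of_not_dvd hqb] at this
    have he : 0 < c.factorization q := hq.factorization_pos_of_dvd hc0 hqc
    omega

theorem stmt11 (a b c : ℕ) (ha : 1 < a) (hab : a < b) (hbc : b < c)
    (hab' : Nat.Coprime a b) (hac' : Nat.Coprime a c) (hbc' : Nat.Coprime b c)
    (p x y x' y' : ℕ) (hxy : x + y ≤ p) (hx'y' : x' + y' ≤ p)
    (u v : ℕ) (hu : u = a ^ (p - x - y) * b ^ x * c ^ y)
    (hv : v = a ^ (p - x' - y') * b ^ x' * c ^ y')
    (h : b * u = a * v ∨ c * u = a * v ∨ b * v = a * u ∨ c * v = a * u) :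
    |(x : ℤ) - x'| + |(y : ℤ) - y'| = 1 := by
  have hb : 1 < b := by omega
  have hc : 1 < c := by omega
  subst hu hv
  rcases h with h | h | h | h
  · obtain ⟨h1, h2⟩ := exp_eq_aux a b c ha hb hc hab' hac' hbc' _ _ _ _ _ _ h
    subst h1 h2
    push_cast
    rw [show ((x:ℤ) - (x+1)) = -1 by ring]
    simp
  · have h' : c * (a ^ (p - x - y) * c ^ y * b ^ x)
        = a * (a ^ (p - x' - y') * c ^ y' * b ^ x') := by ring_nf; ring_nf at h; linarith
    obtain ⟨h1, h2⟩ := exp_eq_aux a c b ha hc hb hac' hab' hbc'.symm _ _ _ _ _ _ h'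
    subst h1 h2
    push_cast
    rw [show ((y:ℤ) - (y+1)) = -1 by ring]
    simp
  · obtain ⟨h1, h2⟩ := exp_eq_aux a b c ha hb hc hab' hac' hbc' _ _ _ _ _ _ h
    subst h1 h2
    push_cast
    rw [show ((x':ℤ) + 1 - x') = 1 by ring]
    simp
  · have h' : c * (a ^ (p - x' - y') * c ^ y' * b ^ x')
        = a * (a ^ (p - x - y) * c ^ y * b ^ x) := by ring_nf; ring_nf at h; linarith
    obtain ⟨h1, h2⟩ := exp_eq_aux a c b ha hc hb hac' hab' hbc'.symm _ _ _ _ _ _ h'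
    subst h1 h2
    push_cast
    rw [show ((y':ℤ) + 1 - y') = 1 by ring]
    simp
end

section
/- Let a, b, c be pairwise coprime integers with 1 < a < b < c, and let p be a non-negative integer. Let C_{p,1} be the graph whose vertex set is {a^{p−x−y} b^x c^y : x, y ∈ ℕ₀, x + y ≤ p} and in which distinct vertices u, v are adjacent if and only if bu = av, cu = av, bv = au, or cv = au. Then the independence number of C_{p,1} equals (i+1)² if p = 2i for some integer i ≥ 0, and equals i(i+1) if p = 2i − 1 for some integer i ≥ 1. -/
/-- The vertex set of the component `C_{p,1}`. -/
def CompVerts (a b c p : ℕ) : Set ℕ :=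
  {m : ℕ | ∃ x y : ℕ, x + y ≤ p ∧ m = a ^ (p - x - y) * b ^ x * c ^ y}

/-- Adjacency in the component `C_{p,1}`: distinct `u, v` are adjacent iff
`bu = av`, `cu = av`, `bv = au`, or `cv = au`. -/
def CompAdj (a b c : ℕ) (u v : ℕ) : Prop :=
  u ≠ v ∧ (b * u = a * v ∨ c * u = a * v ∨ b * v = a * u ∨ c * v = a * u)

/-- `I` is an independent set: a set of vertices of `C_{p,1}` that are pairwise
non-adjacent. -/
def CompIndep (a b c p : ℕ) (I : Finset ℕ) : Prop :=
  ↑I ⊆ CompVerts a b c p ∧ ∀ u ∈ I, ∀ v ∈ I, ¬ CompAdj a b c u v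

/-!
Since `a, b, c` are pairwise coprime, `a ^ (p - x - y) * b ^ x * c ^ y` determines `(x, y)`,
and `b u = a v` (resp. `c u = a v`) says exactly that `v` arises from `u` by increasing `x`
(resp. `y`) by one. So `C_{p,1}` is the grid graph on the triangle `x + y ≤ p`. Its row `y` is a
path on `p - y + 1` vertices, which an independent set meets in at most `(p - y) / 2 + 1`
vertices, and the vertices with `x + y ≡ p (mod 2)` attain this bound in every row. Summing over
the rows gives `(p / 2 + 1) * ((p + 1) / 2 + 1)`.
-/

open Finset SimpleGraph

theorem Nat.le_of_pow_dvd_mul_pow {m b x y : ℕ} (hb : 1 < b) (hm : m.Coprime b)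
    (h : b ^ y ∣ m * b ^ x) : y ≤ x :=
  (Nat.pow_dvd_pow_iff_le_right hb).1 ((hm.symm.pow_left y).dvd_of_dvd_mul_left h)

theorem Nat.eq_of_mul_pow_eq_mul_pow {m n b x y : ℕ} (hb : 1 < b) (hm : m.Coprime b)
    (hn : n.Coprime b) (h : m * b ^ x = n * b ^ y) : x = y :=
  le_antisymm (Nat.le_of_pow_dvd_mul_pow hb hn (h ▸ dvd_mul_left _ _))
    (Nat.le_of_pow_dvd_mul_pow hb hm (h ▸ dvd_mul_left _ _))

theorem Nat.eq_and_eq_of_pow_mul_pow_mul_pow_eq {a b c k₁ x₁ y₁ k₂ x₂ y₂ : ℕ}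
    (hb : 1 < b) (hc : 1 < c) (hab : a.Coprime b) (hac : a.Coprime c) (hbc : b.Coprime c)
    (h : a ^ k₁ * b ^ x₁ * c ^ y₁ = a ^ k₂ * b ^ x₂ * c ^ y₂) : x₁ = x₂ ∧ y₁ = y₂ := by
  have coprime_b (k y : ℕ) : (a ^ k * c ^ y).Coprime b :=
    (hab.pow_left k).mul_left (hbc.symm.pow_left y)
  have coprime_c (k x : ℕ) : (a ^ k * b ^ x).Coprime c :=
    (hac.pow_left k).mul_left (hbc.pow_left x)
  constructor
  · refine Nat.eq_of_mul_pow_eq_mul_pow hb (coprime_b k₁ y₁) (coprime_b k₂ y₂) ?_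
    linear_combination h
  · exact Nat.eq_of_mul_pow_eq_mul_pow hc (coprime_c k₁ x₁) (coprime_c k₂ x₂) h

theorem sum_range_succ_div_two_add_one (p : ℕ) :
    ∑ j ∈ range (p + 1), (j / 2 + 1) = (p / 2 + 1) * ((p + 1) / 2 + 1) := by
  induction p with
  | zero => rfl
  | succ p ih =>
    rw [sum_range_succ, ih, show (p + 1 + 1) / 2 = p / 2 + 1 by omega]
    ring

def halfTriangle (p : ℕ) : Finset (ℕ × ℕ) :=
  (range (p + 1) ×ˢ range (p + 1)).filter fun z => 2 * z.1 + z.2 ≤ p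

theorem card_halfTriangle (p : ℕ) :
    #(halfTriangle p) = (p / 2 + 1) * ((p + 1) / 2 + 1) := by
  have card_row (y : ℕ) (hy : y ∈ range (p + 1)) :
      #((range (p + 1)).filter fun q => 2 * q + y ≤ p) = (p - y) / 2 + 1 := by
    rw [← card_range ((p - y) / 2 + 1)]
    congr 1
    ext q
    simp only [mem_filter, mem_range] at hy ⊢
    omega
  rw [halfTriangle, card_filter, sum_product_right]
  simp only [← card_filter]
  rw [sum_congr rfl card_row, ← sum_range_succ_div_two_add_one]
  exact sum_range_reflect (fun j => j / 2 + 1) (p + 1)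

section CompGraph

variable {a b c p : ℕ}

def compVert (a b c p : ℕ) (z : ℕ × ℕ) : ℕ := a ^ (p - z.1 - z.2) * b ^ z.1 * c ^ z.2

theorem compVerts_eq_image :
    CompVerts a b c p = compVert a b c p '' {z | z.1 + z.2 ≤ p} := by
  ext m
  simp [CompVerts, compVert, eq_comm]

theorem compVert_swap (z : ℕ × ℕ) : compVert a c b p z.swap = compVert a b c p z := by
  rw [compVert, compVert, Prod.fst_swap, Prod.snd_swap, Nat.sub_right_comm, mul_right_comm]

theorem compVert_injective (hb : 1 < b) (hc : 1 < c) (hab : a.Coprime b) (hac : a.Coprime c)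
    (hbc : b.Coprime c) : Function.Injective (compVert a b c p) := fun z w h => by
  obtain ⟨h₁, h₂⟩ := Nat.eq_and_eq_of_pow_mul_pow_mul_pow_eq hb hc hab hac hbc h
  exact Prod.ext h₁ h₂

theorem mul_compVert_eq_iff_fst (hb : 1 < b) (hc : 1 < c) (hab : a.Coprime b)
    (hac : a.Coprime c) (hbc : b.Coprime c) {z w : ℕ × ℕ} (hw : w.1 + w.2 ≤ p) :
    b * compVert a b c p z = a * compVert a b c p w ↔ w = (z.1 + 1, z.2) := by
  have hbz : b * compVert a b c p z = a ^ (p - z.1 - z.2) * b ^ (z.1 + 1) * c ^ z.2 := by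
    rw [compVert]; ring
  have haw : a * compVert a b c p w = a ^ (p - w.1 - w.2 + 1) * b ^ w.1 * c ^ w.2 := by
    rw [compVert]; ring
  rw [hbz, haw]
  constructor
  · intro h
    obtain ⟨h₁, h₂⟩ := Nat.eq_and_eq_of_pow_mul_pow_mul_pow_eq hb hc hab hac hbc h
    exact Prod.ext h₁.symm h₂.symm
  · rintro rfl
    rw [show p - (z.1 + 1) - z.2 + 1 = p - z.1 - z.2 by omega]

theorem mul_compVert_eq_iff_snd (hb : 1 < b) (hc : 1 < c) (hab : a.Coprime b)
    (hac : a.Coprime c) (hbc : b.Coprime c) {z w : ℕ × ℕ} (hw : w.1 + w.2 ≤ p) :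
    c * compVert a b c p z = a * compVert a b c p w ↔ w = (z.1, z.2 + 1) := by
  rw [← compVert_swap z, ← compVert_swap w,
    mul_compVert_eq_iff_fst hc hb hac hab hbc.symm (by simpa [add_comm] using hw)]
  obtain ⟨x₁, y₁⟩ := z
  obtain ⟨x₂, y₂⟩ := w
  simp [and_comm]

theorem compAdj_compVert_iff (hb : 1 < b) (hc : 1 < c) (hab : a.Coprime b)
    (hac : a.Coprime c) (hbc : b.Coprime c) {z w : ℕ × ℕ} (hz : z.1 + z.2 ≤ p)
    (hw : w.1 + w.2 ≤ p) :
    CompAdj a b c (compVert a b c p z) (compVert a b c p w) ↔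
      (hasse ℕ □ hasse ℕ).Adj z w := by
  rw [CompAdj, (compVert_injective hb hc hab hac hbc).ne_iff,
    mul_compVert_eq_iff_fst hb hc hab hac hbc hw, mul_compVert_eq_iff_snd hb hc hab hac hbc hw,
    mul_compVert_eq_iff_fst hb hc hab hac hbc hz, mul_compVert_eq_iff_snd hb hc hab hac hbc hz]
  obtain ⟨x₁, y₁⟩ := z
  obtain ⟨x₂, y₂⟩ := w
  simp only [boxProd_adj, hasse_adj, Nat.covBy_iff_add_one_eq, Prod.mk.injEq, ne_eq]
  omega

theorem exists_compIndep_card_eq_card_halfTriangle (hb : 1 < b) (hc : 1 < c)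
    (hab : a.Coprime b) (hac : a.Coprime c) (hbc : b.Coprime c) :
    ∃ I : Finset ℕ, CompIndep a b c p I ∧ #I = #(halfTriangle p) := by
  -- the vertices `(x, y)` with `x + y ≡ p (mod 2)`, indexed by `(x / 2, y)`
  let σ : ℕ × ℕ → ℕ × ℕ := fun z => (2 * z.1 + (p - z.2) % 2, z.2)
  have σ_injective : Function.Injective σ := fun z w h => by
    simp only [σ, Prod.mk.injEq] at h
    exact Prod.ext (by omega) h.2
  have σ_mem {z : ℕ × ℕ} (hz : z ∈ halfTriangle p) :
      (σ z).1 + (σ z).2 ≤ p ∧ ((σ z).1 + (σ z).2) % 2 = p % 2 := by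
    simp only [halfTriangle, mem_filter, mem_product, mem_range] at hz
    simp only [σ]
    omega
  refine ⟨(halfTriangle p).image (compVert a b c p ∘ σ), ⟨?_, ?_⟩,
    card_image_of_injective _ ((compVert_injective hb hc hab hac hbc).comp σ_injective)⟩
  · rw [compVerts_eq_image, coe_image, Set.image_comp]
    exact Set.image_mono (Set.image_subset_iff.2 fun z hz => (σ_mem hz).1)
  · simp only [mem_image, Function.comp_apply]
    rintro _ ⟨z, hz, rfl⟩ _ ⟨w, hw, rfl⟩ hadj
    obtain ⟨hσz, hz₂⟩ := σ_mem hz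
    obtain ⟨hσw, hw₂⟩ := σ_mem hw
    rw [compAdj_compVert_iff hb hc hab hac hbc hσz hσw] at hadj
    simp only [boxProd_adj, hasse_adj, Nat.covBy_iff_add_one_eq] at hadj
    omega

theorem CompIndep.card_le_card_halfTriangle (hb : 1 < b) (hc : 1 < c) (hab : a.Coprime b)
    (hac : a.Coprime c) (hbc : b.Coprime c) {J : Finset ℕ} (hJ : CompIndep a b c p J) :
    #J ≤ #(halfTriangle p) := by
  obtain ⟨J', hJ', rfl⟩ := subset_set_image_iff.1 (compVerts_eq_image ▸ hJ.1)
  rw [card_image_of_injective _ (compVert_injective hb hc hab hac hbc)]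
  -- two vertices of a row with the same `x / 2` are equal or adjacent
  refine card_le_card_of_injOn (fun z => (z.1 / 2, z.2)) (fun z hz => ?_) fun z hz w hw h => ?_
  · have hz' : z.1 + z.2 ≤ p := hJ' hz
    simp only [halfTriangle, coe_filter, mem_product, mem_range, Set.mem_ofPred_eq]
    omega
  · by_contra hne
    apply hJ.2 _ (mem_image_of_mem _ hz) _ (mem_image_of_mem _ hw)
    rw [compAdj_compVert_iff hb hc hab hac hbc (hJ' hz) (hJ' hw)]
    obtain ⟨x₁, y₁⟩ := z
    obtain ⟨x₂, y₂⟩ := w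
    simp only [boxProd_adj, hasse_adj, Nat.covBy_iff_add_one_eq, Prod.mk.injEq] at hne h ⊢
    omega

end CompGraph

theorem stmt13 (a b c : ℕ) (ha : 1 < a) (hab : a < b) (hbc : b < c)
    (hab' : Nat.Coprime a b) (hac' : Nat.Coprime a c) (hbc' : Nat.Coprime b c)
    (p : ℕ) :
    ∃ N : ℕ,
      (∃ I : Finset ℕ, CompIndep a b c p I ∧ I.card = N) ∧
      (∀ J : Finset ℕ, CompIndep a b c p J → J.card ≤ N) ∧
      (∀ i : ℕ, p = 2 * i → N = (i + 1) ^ 2) ∧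
      (∀ i : ℕ, 1 ≤ i → p = 2 * i - 1 → N = i * (i + 1)) := by
  have hb : 1 < b := ha.trans hab
  have hc : 1 < c := hb.trans hbc
  refine ⟨#(halfTriangle p), exists_compIndep_card_eq_card_halfTriangle hb hc hab' hac' hbc',
    fun J hJ => hJ.card_le_card_halfTriangle hb hc hab' hac' hbc', ?_, ?_⟩
  · rintro i rfl
    rw [card_halfTriangle, show 2 * i / 2 = i by omega, show (2 * i + 1) / 2 = i by omega]
    ring
  · rintro i hi rfl
    rw [card_halfTriangle, show (2 * i - 1) / 2 + 1 = i by omega,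
      show (2 * i - 1 + 1) / 2 = i by omega]
end

section
/- For every real number c > 1, the series Σ_{i=0}^{∞} [ i(i+1)/c^{2i−1} + (i+1)²/c^{2i} ] converges and its sum equals c⁴ / ((c−1)³ (c+1)). -/
/-! With `r = c⁻²`, the `i`-th term is `(i + 1) ((c + 1) i + 1) rⁱ`. Writing the quadratic
`(i + 1) (a i + b)` in the binomial basis `(i+2 choose 2), (i+1 choose 1)` reduces the series to the
negative binomial series `∑ (i+k choose k) rⁱ = (1 - r)^{-(k+1)}`. -/

theorem hasSum_quadratic_mul_geometric {𝕜 : Type*} [NormedField 𝕜] (a b : 𝕜) {r : 𝕜}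
    (hr : ‖r‖ < 1) :
    HasSum (fun i : ℕ => ((i : 𝕜) + 1) * (a * i + b) * r ^ i)
      (2 * a / (1 - r) ^ 3 + (b - 2 * a) / (1 - r) ^ 2) := by
  have h2 := (hasSum_choose_mul_geometric_of_norm_lt_one 2 hr).mul_left (2 * a)
  have h1 := (hasSum_choose_mul_geometric_of_norm_lt_one 1 hr).mul_left (b - 2 * a)
  have hchoose (i : ℕ) : (2 * (i + 2).choose 2 : 𝕜) = (i + 2) * (i + 1) := by
    have := Nat.add_one_mul_choose_eq (i + 1) 1
    rw [Nat.choose_one_right] at this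
    have hnat : 2 * (i + 2).choose 2 = (i + 2) * (i + 1) := by linarith
    simpa using congrArg (Nat.cast : ℕ → 𝕜) hnat
  have hf : (fun i : ℕ => ((i : 𝕜) + 1) * (a * i + b) * r ^ i) = fun i =>
      2 * a * ((i + 2).choose 2 * r ^ i) + (b - 2 * a) * ((i + 1).choose 1 * r ^ i) := by
    funext i
    rw [Nat.choose_one_right]
    push_cast
    linear_combination (-(a * r ^ i)) * hchoose i
  rw [hf, show 2 * a / (1 - r) ^ 3 + (b - 2 * a) / (1 - r) ^ 2 =
    2 * a * (1 / (1 - r) ^ (2 + 1)) + (b - 2 * a) * (1 / (1 - r) ^ (1 + 1)) by ring]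
  exact h2.add h1

theorem term_eq_mul_inv_sq_pow {K : Type*} [Field K] {c : K} (hc : c ≠ 0) (i : ℕ) :
    (i : K) * ((i : K) + 1) / c ^ (2 * (i : ℤ) - 1) + ((i : K) + 1) ^ 2 / c ^ (2 * (i : ℤ)) =
      ((i : K) + 1) * ((c + 1) * i + 1) * (c ^ 2)⁻¹ ^ i := by
  rw [zpow_sub₀ hc, zpow_one, zpow_mul, zpow_natCast, zpow_ofNat, inv_pow]
  field_simp
  ring

theorem stmt14 (c : ℝ) (hc : 1 < c) :
    HasSum
      (fun i : ℕ =>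
        (i : ℝ) * ((i : ℝ) + 1) / c ^ (2 * (i : ℤ) - 1) +
          ((i : ℝ) + 1) ^ 2 / c ^ (2 * (i : ℤ)))
      (c ^ 4 / ((c - 1) ^ 3 * (c + 1))) := by
  have hc0 : c ≠ 0 := by positivity
  have hr : ‖(c ^ 2)⁻¹‖ < 1 := by
    rw [norm_inv, norm_pow, Real.norm_of_nonneg (by positivity)]
    exact inv_lt_one_of_one_lt₀ (one_lt_pow₀ hc two_ne_zero)
  have hsum : c ^ 4 / ((c - 1) ^ 3 * (c + 1)) =
      2 * (c + 1) / (1 - (c ^ 2)⁻¹) ^ 3 + (1 - 2 * (c + 1)) / (1 - (c ^ 2)⁻¹) ^ 2 := by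
    have hc1 : c - 1 ≠ 0 := sub_ne_zero.mpr hc.ne'
    have hc2 : c + 1 ≠ 0 := by positivity
    rw [show 1 - (c ^ 2)⁻¹ = (c - 1) * (c + 1) / c ^ 2 by field_simp; ring]
    field_simp
    ring
  simp only [term_eq_mul_inv_sq_pow hc0, hsum]
  exact hasSum_quadratic_mul_geometric (c + 1) 1 hr
end
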